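/- arXiv:2008.06598 — 3 statements merged into one kernel-verified Lean document; each statement's English description precedes it below -/
import Mathlib

section
/- Let W be an integrable real-valued random variable and let α ∈ (0,1). Then the function h(c) = c + (1/α)·E[min(W − c, 0)] satisfies h(c) → −∞ as c → +∞ and as c → −∞; in particular h is bounded above on ℝ and attains its supremum: there exists c* ∈ ℝ with h(c*) = sup_{c ∈ ℝ} h(c). -/
open MeasureTheory ProbabilityTheory Filter

/-- For an integrable real random variable `W` and level `α ∈ (0,1)`, the
Rockafellar–Uryasev auxiliary function `h(c) = c + (1/α)·E[min(W − c, 0)]`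
tends to `−∞` as `c → +∞` and as `c → −∞`; in particular it is bounded above
and attains its supremum at some `c*`. -/
theorem rockafellarUryasev_attains_sup
    {Ω : Type*} [MeasureSpace Ω] [IsProbabilityMeasure (ℙ : Measure Ω)]
    (W : Ω → ℝ) (hW : Integrable W) {α : ℝ} (hα : α ∈ Set.Ioo (0 : ℝ) 1) :
    Tendsto (fun c : ℝ => c + (1 / α) * ∫ ω, min (W ω - c) 0) atTop atBot ∧
    Tendsto (fun c : ℝ => c + (1 / α) * ∫ ω, min (W ω - c) 0) atBot atBot ∧
    BddAbove (Set.range fun c : ℝ => c + (1 / α) * ∫ ω, min (W ω - c) 0) ∧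
    ∃ cstar : ℝ, ∀ c : ℝ,
      c + (1 / α) * ∫ ω, min (W ω - c) 0 ≤
        cstar + (1 / α) * ∫ ω, min (W ω - cstar) 0 := by
  obtain ⟨hα0, hα1⟩ := hα
  have hαinv : (1 : ℝ) < 1 / α := (one_lt_div hα0).2 hα1
  have hαpos : (0 : ℝ) < 1 / α := by positivity
  set h : ℝ → ℝ := fun c => c + (1 / α) * ∫ ω, min (W ω - c) 0 with hh
  -- integrability of the integrand
  have hint : ∀ c : ℝ, Integrable (fun ω => min (W ω - c) 0) := fun c =>
    (hW.sub (integrable_const c)).inf (integrable_const 0)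
  -- the integral is ≤ 0
  have hneg : ∀ c : ℝ, (∫ ω, min (W ω - c) 0) ≤ 0 := by
    intro c
    have : (∫ ω, min (W ω - c) 0) ≤ ∫ _ : Ω, (0 : ℝ) :=
      integral_mono (hint c) (integrable_const 0) fun ω => min_le_right _ _
    simpa using this
  -- the integral is ≤ E[W] - c
  have hle : ∀ c : ℝ, (∫ ω, min (W ω - c) 0) ≤ (∫ ω, W ω) - c := by
    intro c
    have : (∫ ω, min (W ω - c) 0) ≤ ∫ ω, (W ω - c) :=
      integral_mono (hint c) (hW.sub (integrable_const c)) fun ω => min_le_left _ _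
    simpa [integral_sub hW (integrable_const c)] using this
  -- h(c) ≤ c, giving the atBot limit
  have htoBot : Tendsto h atBot atBot := by
    refine tendsto_atBot_mono (fun c => ?_) tendsto_id
    have := mul_nonpos_of_nonneg_of_nonpos hαpos.le (hneg c)
    simp only [hh, id]
    linarith
  -- h(c) ≤ (1 - 1/α) c + (1/α) E[W], giving the atTop limit
  have htoTop : Tendsto h atTop atBot := by
    have hlin : Tendsto (fun c : ℝ => (1 - 1 / α) * c + (1 / α) * ∫ ω, W ω) atTop atBot := by
      refine tendsto_atBot_add_const_right _ _ ?_
      exact (tendsto_const_mul_atBot_of_neg (by linarith)).2 tendsto_id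
    refine tendsto_atBot_mono (fun c => ?_) hlin
    have h1 := mul_le_mul_of_nonneg_left (hle c) hαpos.le
    simp only [hh]
    nlinarith
  -- continuity of h via a Lipschitz bound on the integral term
  have hcont : Continuous h := by
    have hg : LipschitzWith 1 (fun c : ℝ => ∫ ω, min (W ω - c) 0) := by
      refine LipschitzWith.of_dist_le_mul fun c c' => ?_
      rw [Real.dist_eq, Real.dist_eq, NNReal.coe_one, one_mul]
      rw [← integral_sub (hint c) (hint c')]
      calc |∫ ω, (min (W ω - c) 0 - min (W ω - c') 0)|
          ≤ ∫ ω, |min (W ω - c) 0 - min (W ω - c') 0| :=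
            by simpa [Real.norm_eq_abs] using
              norm_integral_le_integral_norm (fun ω => min (W ω - c) 0 - min (W ω - c') 0)
        _ ≤ ∫ _ : Ω, |c - c'| := by
            refine integral_mono ((hint c).sub (hint c')).abs (integrable_const _) fun ω => ?_
            refine (abs_min_sub_min_le_max _ _ _ _).trans ?_
            have : |W ω - c - (W ω - c')| = |c - c'| := by
              rw [show W ω - c - (W ω - c') = -(c - c') by ring, abs_neg]
            simp [this, abs_sub_comm]
        _ = |c - c'| := by simp
    exact continuous_id.add (continuous_const.mul hg.continuous)
  -- extreme value argument
  have hcocompact : Tendsto h (cocompact ℝ) atBot := by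
    rw [cocompact_eq_atBot_atTop]
    exact tendsto_sup.2 ⟨htoBot, htoTop⟩
  obtain ⟨cstar, hcstar⟩ := hcont.exists_forall_ge hcocompact
  exact ⟨htoTop, htoBot, ⟨h cstar, by rintro x ⟨c, rfl⟩; exact hcstar c⟩, cstar, hcstar⟩
end

section
/- Let W be an integrable real-valued random variable and let α ∈ (0,1). A point c* ∈ ℝ maximizes the function h(c) = c + (1/α)·E[min(W − c, 0)] over ℝ if and only if P(W < c*) ≤ α ≤ P(W ≤ c*), i.e. the set of maximizers of h is exactly the set of α-quantiles of W. -/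
/-!
For `a ≤ b`, the decrease of `c ↦ E[min (W - c) 0]` from `a` to `b` lies between
`(b - a) * P(W ≤ a)` and `(b - a) * P(W < b)`. Comparing `h c` with `h c*` for `c` on either side
of `c*` thus bounds `P(W ≤ c)` by `α` for `c < c*` and `P(W < c)` from below by `α` for `c > c*`,
which passes to `P(W < c*)` and `P(W ≤ c*)` by continuity of measure; conversely the same bounds,
taken at `c*`, give `h c ≤ h c*`.
-/

open MeasureTheory ProbabilityTheory Filter Set Topology

lemma min_sub_zero_sub_min_sub_zero_le {a b x : ℝ} (hab : a ≤ b) :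
    min (x - a) 0 - min (x - b) 0 ≤ (Iio b).indicator (fun _ => b - a) x := by
  simp only [indicator_apply, mem_Iio]
  split_ifs <;> grind

lemma le_min_sub_zero_sub_min_sub_zero {a b x : ℝ} (hab : a ≤ b) :
    (Iic a).indicator (fun _ => b - a) x ≤ min (x - a) 0 - min (x - b) 0 := by
  simp only [indicator_apply, mem_Iic]
  split_ifs <;> grind

lemma add_one_div_mul_le_add_one_div_mul_iff {α x y u v : ℝ} (hα : 0 < α) :
    x + 1 / α * u ≤ y + 1 / α * v ↔ u - v ≤ (y - x) * α := by
  rw [← sub_nonneg, ← sub_nonneg (a := (y - x) * α),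
    show y + 1 / α * v - (x + 1 / α * u) = ((y - x) * α - (u - v)) / α by field_simp; ring,
    le_div_iff₀ hα, zero_mul]

section

variable {Ω : Type*} [MeasurableSpace Ω] {μ : Measure Ω} [IsFiniteMeasure μ] {X : Ω → ℝ}

lemma measureReal_lt_le_of_forall_lt {c ε : ℝ} (h : ∀ a < c, μ.real {ω | X ω ≤ a} ≤ ε) :
    μ.real {ω | X ω < c} ≤ ε := by
  obtain ⟨u, hu_mono, hu_lt, hu_lim⟩ := exists_seq_strictMono_tendsto c
  have hunion : {ω | X ω < c} = ⋃ n, X ⁻¹' Iic (u n) := by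
    rw [← preimage_iUnion, iUnion_Iic_eq_Iio_of_lt_of_tendsto hu_lt hu_lim]; rfl
  have hlim : Tendsto (fun n => μ.real (X ⁻¹' Iic (u n))) atTop (𝓝 (μ.real {ω | X ω < c})) := by
    rw [hunion]
    exact (ENNReal.tendsto_toReal (measure_ne_top _ _)).comp
      (tendsto_measure_iUnion_atTop fun m n hmn =>
        preimage_mono (Iic_subset_Iic.2 (hu_mono.monotone hmn)))
  exact le_of_tendsto' hlim fun n => h _ (hu_lt n)

lemma le_measureReal_le_of_forall_gt (hX : AEMeasurable X μ) {c ε : ℝ}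
    (h : ∀ b, c < b → ε ≤ μ.real {ω | X ω ≤ b}) : ε ≤ μ.real {ω | X ω ≤ c} := by
  obtain ⟨u, hu_anti, hu_gt, hu_lim⟩ := exists_seq_strictAnti_tendsto c
  have hinter : {ω | X ω ≤ c} = ⋂ n, X ⁻¹' Iic (u n) := by
    ext ω
    simp only [mem_ofPred_eq, mem_iInter, mem_preimage, mem_Iic]
    exact ⟨fun hω n => hω.trans (hu_gt n).le, fun hω => ge_of_tendsto' hu_lim hω⟩
  have hlim : Tendsto (fun n => μ.real (X ⁻¹' Iic (u n))) atTop (𝓝 (μ.real {ω | X ω ≤ c})) := by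
    rw [hinter]
    exact (ENNReal.tendsto_toReal (measure_ne_top _ _)).comp
      (tendsto_measure_iInter_atTop (fun n => hX.nullMeasurable measurableSet_Iic)
        (fun m n hmn => preimage_mono (Iic_subset_Iic.2 (hu_anti.antitone hmn)))
        ⟨0, measure_ne_top _ _⟩)
  exact ge_of_tendsto' hlim fun n => h _ (hu_gt n)

lemma integrable_min_sub_const_zero (hX : Integrable X μ) (c : ℝ) :
    Integrable (fun ω => min (X ω - c) 0) μ :=
  (hX.sub (integrable_const c)).inf (integrable_zero _ _ μ)

lemma integral_min_sub_zero_sub_le (hX : Integrable X μ) {a b : ℝ} (hab : a ≤ b) :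
    ∫ ω, min (X ω - a) 0 ∂μ - ∫ ω, min (X ω - b) 0 ∂μ ≤ (b - a) * μ.real {ω | X ω < b} := by
  have hs : NullMeasurableSet {ω | X ω < b} μ := hX.aemeasurable.nullMeasurable measurableSet_Iio
  have hXa := integrable_min_sub_const_zero hX a
  have hXb := integrable_min_sub_const_zero hX b
  calc ∫ ω, min (X ω - a) 0 ∂μ - ∫ ω, min (X ω - b) 0 ∂μ
      = ∫ ω, (min (X ω - a) 0 - min (X ω - b) 0) ∂μ := (integral_sub hXa hXb).symm
    _ ≤ ∫ ω, {ω | X ω < b}.indicator (fun _ => b - a) ω ∂μ :=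
        integral_mono (hXa.sub hXb) ((integrable_const _).indicator₀ hs)
          fun ω => min_sub_zero_sub_min_sub_zero_le hab
    _ = (b - a) * μ.real {ω | X ω < b} := by
        rw [integral_indicator₀ hs, setIntegral_const, smul_eq_mul, mul_comm]

lemma le_integral_min_sub_zero_sub (hX : Integrable X μ) {a b : ℝ} (hab : a ≤ b) :
    (b - a) * μ.real {ω | X ω ≤ a} ≤ ∫ ω, min (X ω - a) 0 ∂μ - ∫ ω, min (X ω - b) 0 ∂μ := by
  have hs : NullMeasurableSet {ω | X ω ≤ a} μ := hX.aemeasurable.nullMeasurable measurableSet_Iic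
  have hXa := integrable_min_sub_const_zero hX a
  have hXb := integrable_min_sub_const_zero hX b
  calc (b - a) * μ.real {ω | X ω ≤ a}
      = ∫ ω, {ω | X ω ≤ a}.indicator (fun _ => b - a) ω ∂μ := by
        rw [integral_indicator₀ hs, setIntegral_const, smul_eq_mul, mul_comm]
    _ ≤ ∫ ω, (min (X ω - a) 0 - min (X ω - b) 0) ∂μ :=
        integral_mono ((integrable_const _).indicator₀ hs) (hXa.sub hXb)
          fun ω => le_min_sub_zero_sub_min_sub_zero hab
    _ = ∫ ω, min (X ω - a) 0 ∂μ - ∫ ω, min (X ω - b) 0 ∂μ := integral_sub hXa hXb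

end

/-- For an integrable real random variable `W` and level `α ∈ (0,1)`, a point `c*`
maximizes the Rockafellar–Uryasev auxiliary function
`h(c) = c + (1/α)·E[min(W − c, 0)]` over `ℝ` if and only if `c*` is an `α`-quantile
of `W`, i.e. `P(W < c*) ≤ α ≤ P(W ≤ c*)`. -/
theorem rockafellarUryasev_maximizer_iff_quantile
    {Ω : Type*} [MeasureSpace Ω] [IsProbabilityMeasure (ℙ : Measure Ω)]
    (W : Ω → ℝ) (hW : Integrable W) {α : ℝ} (hα : α ∈ Set.Ioo (0 : ℝ) 1)
    (cstar : ℝ) :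
    (∀ c : ℝ,
        c + (1 / α) * ∫ ω, min (W ω - c) 0 ≤
          cstar + (1 / α) * ∫ ω, min (W ω - cstar) 0) ↔
      ((ℙ {ω | W ω < cstar}).toReal ≤ α ∧ α ≤ (ℙ {ω | W ω ≤ cstar}).toReal) := by
  simp only [add_one_div_mul_le_add_one_div_mul_iff hα.1, ← measureReal_def]
  constructor
  · intro hmax
    refine ⟨measureReal_lt_le_of_forall_lt fun a ha => ?_,
      le_measureReal_le_of_forall_gt hW.aemeasurable fun b hb => ?_⟩
    · exact le_of_mul_le_mul_left ((le_integral_min_sub_zero_sub hW ha.le).trans (hmax a))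
        (sub_pos.2 ha)
    · have hP : α ≤ (ℙ : Measure Ω).real {ω | W ω < b} :=
        le_of_mul_le_mul_left (by linarith [hmax b, integral_min_sub_zero_sub_le hW hb.le])
          (sub_pos.2 hb)
      exact hP.trans (measureReal_mono fun ω (hω : W ω < b) => hω.le)
  · rintro ⟨hlt, hle⟩ c
    rcases le_or_gt c cstar with hc | hc
    · exact (integral_min_sub_zero_sub_le hW hc).trans
        (mul_le_mul_of_nonneg_left hlt (sub_nonneg.2 hc))
    · linarith [le_integral_min_sub_zero_sub hW hc.le,
        mul_le_mul_of_nonneg_left hle (sub_nonneg.2 hc.le)]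
end

section
/- Let W be an integrable real-valued random variable whose cumulative distribution function is continuous, let α ∈ (0,1), and let W*_α ∈ ℝ satisfy P(W ≤ W*_α) = α. Then (1/α)·E[W·𝟙_{W ≤ W*_α}] = sup_{c ∈ ℝ} { c + (1/α)·E[min(W − c, 0)] }, and the supremum is attained at c = W*_α. That is, the Expected Shortfall at level α, defined as the mean of the worst α-fraction of outcomes, equals the Rockafellar–Uryasev variational expression. -/
/-!
At `c = W*` the tail mean splits as `E[W 𝟙_{W ≤ W*}] = E[min (W - W*) 0] + W* α`, so the
Expected Shortfall is the Rockafellar–Uryasev objective evaluated at `W*`. For any other `c`,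
the pointwise bound `min (w - c) 0 ≤ min (w - W*) 0 + (W* - c) 𝟙_{w ≤ W*}` integrates to
`E[min (W - c) 0] ≤ E[min (W - W*) 0] + (W* - c) α`, i.e. the objective at `c` is at most its
value at `W*`.
-/

open MeasureTheory ProbabilityTheory Set

lemma ite_le_self_eq_min_sub_zero_add (w t : ℝ) :
    (if w ≤ t then w else 0) = min (w - t) 0 + if w ≤ t then t else 0 := by
  split_ifs with h
  · rw [min_eq_left (by linarith)]; ring
  · rw [min_eq_right (by linarith)]; ring

lemma min_sub_zero_le_min_sub_zero_add_ite (w t c : ℝ) :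
    min (w - c) 0 ≤ min (w - t) 0 + if w ≤ t then t - c else 0 := by
  split_ifs with h
  · rcases le_total w c with hc | hc
    · rw [min_eq_left (by linarith), min_eq_left (by linarith)]; linarith
    · rw [min_eq_right (by linarith), min_eq_left (by linarith)]; linarith
  · rw [min_eq_right (a := w - t) (by linarith)]
    linarith [min_le_right (w - c) 0]

namespace MeasureTheory

variable {Ω : Type*} [MeasurableSpace Ω] {μ : Measure Ω} {W : Ω → ℝ}

lemma Integrable.min_sub_const_zero [IsFiniteMeasure μ] (hW : Integrable W μ) (c : ℝ) :
    Integrable (fun ω => min (W ω - c) 0) μ :=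
  (hW.sub (integrable_const c)).inf (integrable_zero Ω ℝ μ)

lemma integral_indicator_le_const (hW : AEStronglyMeasurable W μ) (t k : ℝ) :
    ∫ ω, {ω | W ω ≤ t}.indicator (fun _ => k) ω ∂μ = k * μ.real {ω | W ω ≤ t} := by
  rw [integral_indicator₀ (hW.nullMeasurableSet_le aestronglyMeasurable_const),
    setIntegral_const, smul_eq_mul, mul_comm]

lemma integrable_indicator_le_const [IsFiniteMeasure μ] (hW : AEStronglyMeasurable W μ)
    (t k : ℝ) : Integrable ({ω | W ω ≤ t}.indicator fun _ => k) μ :=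
  (integrable_const k).indicator₀ (hW.nullMeasurableSet_le aestronglyMeasurable_const)

lemma integral_indicator_le_eq_integral_min_sub_zero_add [IsFiniteMeasure μ]
    (hW : Integrable W μ) (t : ℝ) :
    ∫ ω, {ω | W ω ≤ t}.indicator W ω ∂μ =
      ∫ ω, min (W ω - t) 0 ∂μ + t * μ.real {ω | W ω ≤ t} := by
  rw [← integral_indicator_le_const hW.1, ← integral_add (hW.min_sub_const_zero t)
    (integrable_indicator_le_const hW.1 t t)]
  congr 1 with ω
  simpa only [indicator_apply, mem_ofPred_eq] using ite_le_self_eq_min_sub_zero_add (W ω) t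

lemma integral_min_sub_zero_le_integral_min_sub_zero_add [IsFiniteMeasure μ]
    (hW : Integrable W μ) (t c : ℝ) :
    ∫ ω, min (W ω - c) 0 ∂μ ≤
      ∫ ω, min (W ω - t) 0 ∂μ + (t - c) * μ.real {ω | W ω ≤ t} := by
  rw [← integral_indicator_le_const hW.1, ← integral_add (hW.min_sub_const_zero t)
    (integrable_indicator_le_const hW.1 t (t - c))]
  refine integral_mono (hW.min_sub_const_zero c)
    ((hW.min_sub_const_zero t).add (integrable_indicator_le_const hW.1 t (t - c))) fun ω => ?_
  simpa only [Pi.add_apply, indicator_apply, mem_ofPred_eq]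
    using min_sub_zero_le_min_sub_zero_add_ite (W ω) t c

end MeasureTheory

theorem expectedShortfall_eq_rockafellarUryasev_general
    {Ω : Type*} [MeasureSpace Ω] [IsProbabilityMeasure (ℙ : Measure Ω)]
    (W : Ω → ℝ) (hW : Integrable W)
    {α : ℝ} (hα : α ∈ Set.Ioo (0 : ℝ) 1) (Wstar : ℝ)
    (hVaR : (ℙ {ω | W ω ≤ Wstar}).toReal = α) :
    ((1 / α) * ∫ ω, Set.indicator {ω | W ω ≤ Wstar} W ω) =
        (⨆ c : ℝ, (c + (1 / α) * ∫ ω, min (W ω - c) 0)) ∧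
      (∀ c : ℝ,
        c + (1 / α) * ∫ ω, min (W ω - c) 0 ≤
          Wstar + (1 / α) * ∫ ω, min (W ω - Wstar) 0) := by
  have hα₀ : α ≠ 0 := hα.1.ne'
  have hES : (1 / α) * ∫ ω, {ω | W ω ≤ Wstar}.indicator W ω =
      Wstar + (1 / α) * ∫ ω, min (W ω - Wstar) 0 := by
    rw [integral_indicator_le_eq_integral_min_sub_zero_add hW, measureReal_def, hVaR]
    field_simp
    ring
  have hmax : ∀ c : ℝ, c + (1 / α) * ∫ ω, min (W ω - c) 0 ≤
      Wstar + (1 / α) * ∫ ω, min (W ω - Wstar) 0 := by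
    intro c
    have h := integral_min_sub_zero_le_integral_min_sub_zero_add hW Wstar c
    rw [measureReal_def, hVaR] at h
    have h' := div_le_div_of_nonneg_right h hα.1.le
    rw [add_div, mul_div_cancel_right₀ _ hα₀] at h'
    simp only [one_div_mul_eq_div]
    linarith
  refine ⟨?_, hmax⟩
  rw [hES]
  exact le_antisymm (le_ciSup ⟨_, forall_mem_range.2 hmax⟩ Wstar) (ciSup_le hmax)

/-- For an integrable real random variable `W` with continuous distribution function,
`α ∈ (0,1)`, and Value at Risk `W*` with `P(W ≤ W*) = α`, the Expected Shortfall
`(1/α)·E[W·𝟙_{W ≤ W*}]` (mean of the worst `α`-fraction of outcomes) equals the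
Rockafellar–Uryasev variational expression
`sup_c { c + (1/α)·E[min(W − c, 0)] }`, and the supremum is attained at `c = W*`. -/
theorem expectedShortfall_eq_rockafellarUryasev
    {Ω : Type*} [MeasureSpace Ω] [IsProbabilityMeasure (ℙ : Measure Ω)]
    (W : Ω → ℝ) (hW : Integrable W)
    (hcdf : Continuous fun c : ℝ => (ℙ {ω | W ω ≤ c}).toReal)
    {α : ℝ} (hα : α ∈ Set.Ioo (0 : ℝ) 1) (Wstar : ℝ)
    (hVaR : (ℙ {ω | W ω ≤ Wstar}).toReal = α) :
    ((1 / α) * ∫ ω, Set.indicator {ω | W ω ≤ Wstar} W ω) =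
        (⨆ c : ℝ, (c + (1 / α) * ∫ ω, min (W ω - c) 0)) ∧
      (∀ c : ℝ,
        c + (1 / α) * ∫ ω, min (W ω - c) 0 ≤
          Wstar + (1 / α) * ∫ ω, min (W ω - Wstar) 0) :=
  expectedShortfall_eq_rockafellarUryasev_general W hW hα Wstar hVaR
end
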